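/- Let B be a C*-algebra that is the closure of an increasing union of C*-subalgebras C_0 ⊆ C_1 ⊆ C_2 ⊆ ⋯, and let (J_n) be a decreasing sequence of closed ideals of B such that C_m ∩ J_n = {0} whenever m < n. Then ⋂_n J_n = {0}. -/

import Mathlib

/-!
Let `x ∈ ⋂ Jₙ` and `a = x⋆x ≥ 0`. Given `ε > 0`, density gives a self-adjoint `c ∈ Cₘ` with
`‖c - a‖ ≤ ε`, so `c - ε ≤ a`. The element `(c - 2ε)₊` lies in `Cₘ` (functional calculus in a
closed subalgebra) and in `Jₘ₊₁`, because it is dominated by a conjugate of `a` and closed ideals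
of a C⋆-algebra are hereditary. Hence it vanishes, `c ≤ 2ε` and `‖a‖ ≤ 3ε`.
-/

section CFC

variable {R A : Type*} {p : A → Prop} [CommSemiring R] [StarRing R] [MetricSpace R]
  [IsTopologicalSemiring R] [ContinuousStar R] [TopologicalSpace A] [Ring A] [StarRing A]
  [Algebra R A] [ContinuousFunctionalCalculus R A p]

lemma cfc_mul_mul (f g h : R → R) (a : A) (hf : ContinuousOn f (spectrum R a))
    (hg : ContinuousOn g (spectrum R a)) (hh : ContinuousOn h (spectrum R a)) :
    cfc f a * cfc g a * cfc h a = cfc (fun t ↦ f t * g t * h t) a := by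
  rw [← cfc_mul f g a hf hg, ← cfc_mul (fun t ↦ f t * g t) h a (hf.mul hg) hh]

end CFC

section NonUnital

variable {A : Type*} [NonUnitalCStarAlgebra A]

lemma NonUnitalStarSubalgebra.exists_isSelfAdjoint_norm_sub_le (S : NonUnitalStarSubalgebra ℂ A)
    {a c : A} (ha : IsSelfAdjoint a) (hc : c ∈ S) :
    ∃ c' ∈ S, IsSelfAdjoint c' ∧ ‖c' - a‖ ≤ ‖c - a‖ := by
  refine ⟨realPart c, ?_, (realPart c).2, ?_⟩
  · rw [realPart_apply_coe, ← Complex.coe_smul]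
    exact SMulMemClass.smul_mem _ (add_mem hc (star_mem hc))
  · calc ‖(realPart c : A) - a‖ = ‖realPart (c - a)‖ := by
          rw [map_sub]
          change _ = ‖((realPart c - realPart a : selfAdjoint A) : A)‖
          rw [AddSubgroupClass.coe_sub, ha.coe_realPart]
      _ ≤ ‖c - a‖ := realPart.norm_le (c - a)

lemma CStarAlgebra.norm_mul_sq_le_of_le [PartialOrder A] [StarOrderedRing A] {x b : A}
    (hx : 0 ≤ x) (hxb : x ≤ b) (u : A) : ‖x * u‖ ^ 2 ≤ ‖x‖ * ‖star u * b * u‖ := by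
  set w := CFC.sqrt x
  have hw : star w = w := (CFC.sqrt_nonneg x).isSelfAdjoint.star_eq
  have hww : w * w = x := CFC.sqrt_mul_sqrt_self x
  have hnorm_w : ‖w‖ ^ 2 = ‖x‖ := by
    rw [sq, ← CStarRing.norm_star_mul_self, hw, hww]
  have hnorm_wu : ‖w * u‖ ^ 2 = ‖star u * x * u‖ := by
    rw [sq, ← CStarRing.norm_star_mul_self, star_mul, hw, ← hww]; noncomm_ring
  have hconj : ‖star u * x * u‖ ≤ ‖star u * b * u‖ :=
    CStarAlgebra.norm_le_norm_of_nonneg_of_le (star_left_conjugate_nonneg hx u)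
      (star_left_conjugate_le_conjugate hxb u)
  calc ‖x * u‖ ^ 2 = ‖w * (w * u)‖ ^ 2 := by rw [← mul_assoc, hww]
    _ ≤ (‖w‖ * ‖w * u‖) ^ 2 := by gcongr; exact norm_mul_le _ _
    _ = ‖x‖ * ‖star u * x * u‖ := by rw [mul_pow, hnorm_w, hnorm_wu]
    _ ≤ ‖x‖ * ‖star u * b * u‖ := by gcongr

end NonUnital

section

variable {A : Type*} [CStarAlgebra A]

lemma NonUnitalStarSubalgebra.cfc_sub_posPart_mem (S : NonUnitalStarSubalgebra ℂ A)
    (hS : IsClosed (S : Set A)) {c : A} (hc : c ∈ S) {r : ℝ} (hr : 0 ≤ r) :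
    cfc (fun t : ℝ ↦ max (t - r) 0) c ∈ S := by
  have := hS
  rw [← cfcₙ_eq_cfc (by fun_prop) (by simpa using hr)]
  exact cfcₙ_mem (𝕜 := ℝ) _ hc

variable [PartialOrder A] [StarOrderedRing A]

lemma IsSelfAdjoint.le_add_algebraMap_of_norm_sub_le {x y : A} (hx : IsSelfAdjoint x)
    (hy : IsSelfAdjoint y) {r : ℝ} (h : ‖x - y‖ ≤ r) : x ≤ y + algebraMap ℝ A r := by
  rw [← sub_le_iff_le_add']
  exact (hx.sub hy).le_algebraMap_norm_self.trans (algebraMap_mono A h)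

-- Witness `k = (s + b)⁻¹`: then `1 - b k = s (s + b)⁻¹`, and `s² t / (s + t)² ≤ s` for `t ≥ 0`.
lemma CStarAlgebra.exists_norm_star_one_sub_mul_le {b : A} (hb : 0 ≤ b) {s : ℝ} (hs : 0 < s) :
    ∃ k : A, ‖star (1 - b * k) * b * (1 - b * k)‖ ≤ s := by
  have hspec : ∀ t ∈ spectrum ℝ b, 0 ≤ t := fun t ht ↦ spectrum_nonneg_of_nonneg hb ht
  have hpos : ∀ t ∈ spectrum ℝ b, 0 < s + t := fun t ht ↦ by linarith [hspec t ht]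
  have hinv : ContinuousOn (fun t : ℝ ↦ (s + t)⁻¹) (spectrum ℝ b) :=
    ContinuousOn.inv₀ (by fun_prop) fun t ht ↦ (hpos t ht).ne'
  have hu : 1 - b * cfc (fun t : ℝ ↦ (s + t)⁻¹) b = cfc (fun t : ℝ ↦ s * (s + t)⁻¹) b := by
    have : (spectrum ℝ b).EqOn (fun t ↦ s * (s + t)⁻¹) (fun t ↦ 1 - t * (s + t)⁻¹) :=
      fun t ht ↦ by field_simp [(hpos t ht).ne']; ring
    rw [cfc_congr this, cfc_sub (fun _ ↦ 1) (fun t ↦ t * (s + t)⁻¹) b (by fun_prop)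
      (continuousOn_id.mul hinv), cfc_const_one ℝ b, cfc_mul (fun t ↦ t) _ b (by fun_prop) hinv,
      cfc_id' ℝ b]
  refine ⟨cfc (fun t : ℝ ↦ (s + t)⁻¹) b, ?_⟩
  have hcont : ContinuousOn (fun t : ℝ ↦ s * (s + t)⁻¹) (spectrum ℝ b) :=
    continuousOn_const.mul hinv
  rw [hu, (cfc_predicate _ b : IsSelfAdjoint _).star_eq]
  nth_rw 2 [← cfc_id' ℝ b]
  rw [cfc_mul_mul _ _ _ b hcont (by fun_prop) hcont]
  refine norm_cfc_le hs.le fun t ht ↦ ?_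
  have ht0 := hspec t ht
  have hst := hpos t ht
  rw [Real.norm_of_nonneg (by positivity),
    show s * (s + t)⁻¹ * t * (s * (s + t)⁻¹) = s * (s * t / (s + t) ^ 2) by field_simp]
  refine mul_le_of_le_one_right hs.le ((div_le_one (by positivity)).mpr ?_)
  nlinarith

theorem TwoSidedIdeal.mem_of_nonneg_of_le {J : TwoSidedIdeal A} (hJ : IsClosed (J : Set A))
    {x b : A} (hb : b ∈ J) (hx : 0 ≤ x) (hxb : x ≤ b) : x ∈ J := by
  change x ∈ (J : Set A)
  rw [← hJ.closure_eq, Metric.mem_closure_iff]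
  intro η hη
  obtain ⟨k, hk⟩ := CStarAlgebra.exists_norm_star_one_sub_mul_le (hx.trans hxb)
    (s := η ^ 2 / (‖x‖ + 1)) (by positivity)
  refine ⟨x * (b * k), J.mul_mem_left _ _ (J.mul_mem_right _ _ hb), ?_⟩
  rw [dist_eq_norm, ← mul_one_sub]
  refine lt_of_pow_lt_pow_left₀ 2 hη.le ?_
  calc ‖x * (1 - b * k)‖ ^ 2 ≤ ‖x‖ * (η ^ 2 / (‖x‖ + 1)) :=
        (CStarAlgebra.norm_mul_sq_le_of_le hx hxb _).trans (by gcongr)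
    _ < η ^ 2 := by
        rw [mul_div_assoc', div_lt_iff₀ (by positivity)]
        nlinarith [norm_nonneg x, pow_pos hη 2]

-- `(t - r')₊ = g(t) (t - r) g(t)` with `g(t) = √((t - r')₊ / max (t - r) (r' - r))`, so
-- `(c - r')₊ ≤ g(c) a g(c) ∈ J` and closed ideals are hereditary.
theorem TwoSidedIdeal.cfc_sub_posPart_mem {J : TwoSidedIdeal A} (hJ : IsClosed (J : Set A))
    {a c : A} (ha : a ∈ J) (hc : IsSelfAdjoint c) {r r' : ℝ} (hr : r < r')
    (hca : c - algebraMap ℝ A r ≤ a) : cfc (fun t : ℝ ↦ max (t - r') 0) c ∈ J := by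
  set g : ℝ → ℝ := fun t ↦ √(max (t - r') 0 / max (t - r) (r' - r))
  have hden : ∀ t, 0 < max (t - r) (r' - r) := fun t ↦ lt_max_of_lt_right (by linarith)
  have hg : Continuous g :=
    Real.continuous_sqrt.comp ((by fun_prop : Continuous _).div (by fun_prop) fun t ↦ (hden t).ne')
  have hfactor : ∀ t, g t * (t - r) * g t = max (t - r') 0 := by
    intro t
    rw [mul_right_comm, Real.mul_self_sqrt (div_nonneg (le_max_right _ _) (hden t).le)]
    rcases le_or_gt t r' with ht | ht
    · simp [max_eq_right (sub_nonpos.mpr ht)]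
    · rw [max_eq_left (by linarith), max_eq_left (by linarith), div_mul_cancel₀ _ (by linarith)]
  have hcr : cfc (fun t : ℝ ↦ t - r) c = c - algebraMap ℝ A r := by
    rw [cfc_sub (fun t : ℝ ↦ t) (fun _ ↦ r) c, cfc_id' ℝ c, cfc_const r c]
  have hconj :
      cfc (fun t : ℝ ↦ max (t - r') 0) c = cfc g c * (c - algebraMap ℝ A r) * cfc g c := by
    rw [← hcr, cfc_mul_mul _ _ _ c hg.continuousOn (by fun_prop) hg.continuousOn]
    exact cfc_congr fun t _ ↦ (hfactor t).symm
  have hG : IsSelfAdjoint (cfc g c) := cfc_predicate g c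
  refine J.mem_of_nonneg_of_le hJ (J.mul_mem_right _ (cfc g c) (J.mul_mem_left (cfc g c) _ ha))
    (cfc_nonneg fun t _ ↦ le_max_right _ _) ?_
  rw [hconj]
  simpa only [hG.star_eq] using star_left_conjugate_le_conjugate hca (cfc g c)

lemma le_algebraMap_of_cfc_sub_posPart_eq_zero {c : A} (hc : IsSelfAdjoint c) {r : ℝ}
    (h : cfc (fun t : ℝ ↦ max (t - r) 0) c = 0) : c ≤ algebraMap ℝ A r := by
  refine le_algebraMap_of_spectrum_le (fun t ht ↦ ?_) hc
  simpa using
    eqOn_of_cfc_eq_cfc (h.trans (cfc_const_zero ℝ c).symm) (by fun_prop) (by fun_prop) hc ht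

theorem norm_le_of_norm_sub_le_of_inter_eq_zero {S : NonUnitalStarSubalgebra ℂ A}
    (hS : IsClosed (S : Set A)) {J : TwoSidedIdeal A} (hJ : IsClosed (J : Set A))
    (hSJ : (S : Set A) ∩ J = {0}) {a c : A} (ha : 0 ≤ a) (haJ : a ∈ J) (hc : c ∈ S) {ε : ℝ}
    (hε : 0 < ε) (hca : ‖c - a‖ ≤ ε) : ‖a‖ ≤ 3 * ε := by
  obtain ⟨c', hc'S, hc'sa, hc'a⟩ := S.exists_isSelfAdjoint_norm_sub_le ha.isSelfAdjoint hc
  replace hc'a := hc'a.trans hca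
  have hq : cfc (fun t : ℝ ↦ max (t - 2 * ε) 0) c' ∈ (S : Set A) ∩ J :=
    ⟨S.cfc_sub_posPart_mem hS hc'S (by positivity),
      J.cfc_sub_posPart_mem hJ haJ hc'sa (by linarith)
        (sub_le_iff_le_add.mpr (hc'sa.le_add_algebraMap_of_norm_sub_le ha.isSelfAdjoint hc'a))⟩
  rw [hSJ] at hq
  have hc'le : c' ≤ algebraMap ℝ A (2 * ε) := le_algebraMap_of_cfc_sub_posPart_eq_zero hc'sa hq
  rw [CStarAlgebra.norm_le_iff_le_algebraMap a (by positivity)]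
  calc a ≤ c' + algebraMap ℝ A ε :=
        ha.isSelfAdjoint.le_add_algebraMap_of_norm_sub_le hc'sa (by rwa [norm_sub_rev])
    _ ≤ algebraMap ℝ A (2 * ε) + algebraMap ℝ A ε := by gcongr
    _ = algebraMap ℝ A (3 * ε) := by rw [← map_add]; ring_nf

end

theorem statement15_general
    {B : Type*} [CStarAlgebra B]
    (C : ℕ → NonUnitalStarSubalgebra ℂ B)
    (hCclosed : ∀ n, IsClosed (C n : Set B))
    (hCdense : Dense (⋃ n, (C n : Set B)))
    (J : ℕ → TwoSidedIdeal B)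
    (hJclosed : ∀ n, IsClosed (J n : Set B))
    (hdisj : ∀ m n : ℕ, m < n → (C m : Set B) ∩ (J n : Set B) = {0}) :
    ⋂ n, (J n : Set B) = {0} := by
  let := CStarAlgebra.spectralOrder B
  have := CStarAlgebra.spectralOrderedRing B
  refine Set.eq_singleton_iff_unique_mem.mpr
    ⟨Set.mem_iInter.mpr fun n ↦ (J n).zero_mem, fun x hx ↦ ?_⟩
  have hmem : ∀ n, star x * x ∈ J n := fun n ↦ (J n).mul_mem_left _ _ (Set.mem_iInter.mp hx n)
  have hsmall : ∀ ε > 0, ‖star x * x‖ ≤ 3 * ε := by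
    intro ε hε
    obtain ⟨c, hc, hca⟩ := Metric.mem_closure_iff.mp (hCdense (star x * x)) ε hε
    obtain ⟨m, hcm⟩ := Set.mem_iUnion.mp hc
    exact norm_le_of_norm_sub_le_of_inter_eq_zero (hCclosed m) (hJclosed (m + 1))
      (hdisj m (m + 1) m.lt_succ_self) (star_mul_self_nonneg x) (hmem (m + 1)) hcm hε
      (by rw [← dist_eq_norm, dist_comm]; exact hca.le)
  have hzero : ‖star x * x‖ = 0 := by
    refine le_antisymm (le_of_forall_pos_le_add fun ε hε ↦ ?_) (norm_nonneg _)
    simpa [mul_div_cancel₀] using hsmall (ε / 3) (by positivity)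
  exact (CStarRing.star_mul_self_eq_zero_iff x).mp (norm_eq_zero.mp hzero)

/-- Let `B` be a C*-algebra that is the closure of an increasing union of
C*-subalgebras `C 0 ⊆ C 1 ⊆ ⋯`, and let `(J n)` be a decreasing sequence of closed
(two-sided) ideals of `B` such that `C m ∩ J n = {0}` whenever `m < n`.
Then `⋂ n, J n = {0}`. -/
theorem statement15
    {B : Type*} [CStarAlgebra B]
    (C : ℕ → NonUnitalStarSubalgebra ℂ B)
    (hCclosed : ∀ n, IsClosed (C n : Set B))
    (hCmono : Monotone C)
    (hCdense : Dense (⋃ n, (C n : Set B)))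
    (J : ℕ → TwoSidedIdeal B)
    (hJclosed : ∀ n, IsClosed (J n : Set B))
    (hJanti : ∀ m n : ℕ, m ≤ n → (J n : Set B) ⊆ (J m : Set B))
    (hdisj : ∀ m n : ℕ, m < n → (C m : Set B) ∩ (J n : Set B) = {0}) :
    ⋂ n, (J n : Set B) = {0} :=
  statement15_general C hCclosed hCdense J hJclosed hdisj
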